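/- arXiv:2102.09924 — 2 statements merged into one kernel-verified Lean document; each statement's English description precedes it below -/
import Mathlib

section
/- Let f : ℝ × [u,v] → ℝ be locally Lipschitz continuous, let F(x) = ∫_u^v f(x,s) ds, let x ∈ ℝ, and let E ⊆ [u,v] be measurable with [u,v]\E of Lebesgue measure zero such that for every s ∈ E the map y ↦ f(y,s) is differentiable at x. Then F is differentiable at x and F'(x) = ∫_E (∂f/∂x)(x,s) ds. -/
open MeasureTheory Filter Metric Set Function
open scoped Topology

/-! On the compact set `closedBall x 1 ×ˢ [u, v]` local Lipschitz continuity of `f` upgrades to a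
single Lipschitz constant, which bounds the difference quotients in `y` uniformly in `s`, so
dominated differentiation under the integral sign applies. The derivative is measurable as an
a.e. limit of difference quotients. -/

theorem aestronglyMeasurable_of_hasDerivAt_ae {𝕜 α E : Type*} [NontriviallyNormedField 𝕜]
    [NormedAddCommGroup E] [NormedSpace 𝕜 E] [MeasurableSpace α] {μ : Measure α}
    {F : 𝕜 → α → E} {F' : α → E} {x₀ : 𝕜} (hF_meas : ∀ x, AEStronglyMeasurable (F x) μ)
    (h_diff : ∀ᵐ a ∂μ, HasDerivAt (F · a) (F' a) x₀) : AEStronglyMeasurable F' μ := by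
  obtain ⟨x, hx⟩ := (𝓝[≠] x₀).exists_seq_tendsto
  refine aestronglyMeasurable_of_tendsto_ae atTop (f := fun n a ↦ slope (F · a) x₀ (x n))
    (fun n ↦ ((hF_meas _).sub (hF_meas x₀)).const_smul _) ?_
  filter_upwards [h_diff] with a ha
  exact (hasDerivAt_iff_tendsto_slope.1 ha).comp hx

theorem LocallyLipschitzOn.exists_lipschitzOnWith_slices {α β γ : Type*} [PseudoMetricSpace α]
    [ProperSpace α] [PseudoMetricSpace β] [PseudoMetricSpace γ] {f : α → β → γ} {S : Set β}
    (hS : IsCompact S) (hf : LocallyLipschitzOn (univ ×ˢ S) (uncurry f)) (x : α) (r : ℝ) :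
    ∃ K, ∀ s ∈ S, LipschitzOnWith K (f · s) (closedBall x r) := by
  have hf_ball : LocallyLipschitzOn (closedBall x r ×ˢ S) (uncurry f) :=
    hf.mono (prod_mono (subset_univ _) subset_rfl)
  obtain ⟨K, hK⟩ := hf_ball.exists_lipschitzOnWith_of_compact ((isCompact_closedBall x r).prod hS)
  refine ⟨K, fun s hs ↦ ?_⟩
  simpa [comp_def] using hK.comp (LipschitzWith.prodMk_right s).lipschitzOnWith
    (fun y hy ↦ mk_mem_prod hy hs)

theorem hasDerivAt_setIntegral_of_locallyLipschitzOn {𝕜 β E : Type*} [RCLike 𝕜]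
    [NormedAddCommGroup E] [NormedSpace ℝ E] [NormedSpace 𝕜 E] [MetricSpace β]
    [MeasurableSpace β] [OpensMeasurableSpace β] {μ : Measure β}
    [IsFiniteMeasureOnCompacts μ] {f : 𝕜 → β → E} {f' : β → E} {S : Set β} {x : 𝕜}
    (hS : IsCompact S) (hf : LocallyLipschitzOn (univ ×ˢ S) (uncurry f))
    (h_diff : ∀ᵐ s ∂μ.restrict S, HasDerivAt (f · s) (f' s) x) :
    HasDerivAt (fun y ↦ ∫ s in S, f y s ∂μ) (∫ s in S, f' s ∂μ) x := by
  have hcont (y : 𝕜) : ContinuousOn (f y) S :=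
    hf.continuousOn.comp (Continuous.prodMk_right y).continuousOn
      fun s hs ↦ mk_mem_prod trivial hs
  have hf_int (y : 𝕜) : IntegrableOn (f y) S μ := (hcont y).integrableOn_compact hS
  have hf_meas (y : 𝕜) : AEStronglyMeasurable (f y) (μ.restrict S) :=
    (hf_int y).aestronglyMeasurable
  obtain ⟨K, hK⟩ := hf.exists_lipschitzOnWith_slices hS x 1
  have h_lip : ∀ᵐ s ∂μ.restrict S, LipschitzOnWith (Real.nnabs K) (f · s) (closedBall x 1) := by
    filter_upwards [ae_restrict_mem hS.measurableSet] with s hs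
    simpa using hK s hs
  exact (hasDerivAt_integral_of_dominated_loc_of_lip (closedBall_mem_nhds x one_pos)
    (.of_forall hf_meas) (hf_int x) (aestronglyMeasurable_of_hasDerivAt_ae hf_meas h_diff) h_lip
    (integrableOn_const hS.measure_ne_top) h_diff).2

theorem interchange_deriv_integral_general
    (u v : ℝ) (f : ℝ → ℝ → ℝ)
    (hf : ∀ p : ℝ × ℝ, p.2 ∈ Set.Icc u v → ∃ K : NNReal, ∃ t ∈ nhdsWithin p (Set.univ ×ˢ Set.Icc u v),
      LipschitzOnWith K (fun q : ℝ × ℝ => f q.1 q.2) t)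
    (F : ℝ → ℝ) (hF : ∀ x : ℝ, F x = ∫ s in Set.Icc u v, f x s)
    (x : ℝ) (E : Set ℝ) (hEsub : E ⊆ Set.Icc u v)
    (hnull : volume (Set.Icc u v \ E) = 0)
    (hdiff : ∀ s ∈ E, DifferentiableAt ℝ (fun y => f y s) x) :
    HasDerivAt F (∫ s in E, deriv (fun y => f y s) x) x := by
  have hE_ae : E =ᵐ[volume] Icc u v := ae_eq_set.2 ⟨by simp [sdiff_eq_empty.2 hEsub], hnull⟩
  have h_diff : ∀ᵐ s ∂volume.restrict (Icc u v),
      HasDerivAt (fun y ↦ f y s) (deriv (fun y ↦ f y s) x) x := by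
    rw [← Measure.restrict_congr_set hE_ae]
    filter_upwards [ae_restrict_mem₀ (measurableSet_Icc.nullMeasurableSet.congr hE_ae.symm)]
      with s hs using (hdiff s hs).hasDerivAt
  rw [funext hF, setIntegral_congr_set hE_ae]
  exact hasDerivAt_setIntegral_of_locallyLipschitzOn isCompact_Icc (fun p hp ↦ hf p hp.2)
    h_diff

theorem interchange_deriv_integral
    (u v : ℝ) (huv : u < v) (f : ℝ → ℝ → ℝ)
    (hf : ∀ p : ℝ × ℝ, p.2 ∈ Set.Icc u v → ∃ K : NNReal, ∃ t ∈ nhdsWithin p (Set.univ ×ˢ Set.Icc u v),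
      LipschitzOnWith K (fun q : ℝ × ℝ => f q.1 q.2) t)
    (F : ℝ → ℝ) (hF : ∀ x : ℝ, F x = ∫ s in Set.Icc u v, f x s)
    (x : ℝ) (E : Set ℝ) (hE : MeasurableSet E) (hEsub : E ⊆ Set.Icc u v)
    (hnull : volume (Set.Icc u v \ E) = 0)
    (hdiff : ∀ s ∈ E, DifferentiableAt ℝ (fun y => f y s) x) :
    HasDerivAt F (∫ s in E, deriv (fun y => f y s) x) x :=
  interchange_deriv_integral_general u v f hf F hF x E hEsub hnull hdiff
end

section
/- In the one-hidden-layer ReLU ANN setting with constant target α, the squared norm of the generalized gradient satisfies ‖G(φ)‖² ≤ (8‖φ‖² + 4) L_∞(φ) for every parameter vector φ ∈ ℝ^{3H+1}. -/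
open MeasureTheory

noncomputable section

/-- weight parameters -/
def wp (H : ℕ) (φ : EuclideanSpace ℝ (Fin (3*H+1))) (j : Fin H) : ℝ := φ ⟨j.1, by omega⟩
/-- bias parameters -/
def bp (H : ℕ) (φ : EuclideanSpace ℝ (Fin (3*H+1))) (j : Fin H) : ℝ := φ ⟨H + j.1, by omega⟩
/-- outer weight parameters -/
def vp (H : ℕ) (φ : EuclideanSpace ℝ (Fin (3*H+1))) (j : Fin H) : ℝ := φ ⟨2*H + j.1, by omega⟩
/-- output bias -/
def cp (H : ℕ) (φ : EuclideanSpace ℝ (Fin (3*H+1))) : ℝ := φ ⟨3*H, by omega⟩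

/-- realization of the one-hidden-layer ReLU network -/
def realization (H : ℕ) (φ : EuclideanSpace ℝ (Fin (3*H+1))) (x : ℝ) : ℝ :=
  cp H φ + ∑ j : Fin H, vp H φ j * max (wp H φ j * x + bp H φ j) 0

/-- risk with constant target α -/
def risk (H : ℕ) (α : ℝ) (φ : EuclideanSpace ℝ (Fin (3*H+1))) : ℝ :=
  ∫ y in (0:ℝ)..1, (realization H φ y - α)^2

/-- activity interval I_j^φ -/
def actSet (H : ℕ) (φ : EuclideanSpace ℝ (Fin (3*H+1))) (j : Fin H) : Set ℝ :=
  {x | x ∈ Set.Icc (0:ℝ) 1 ∧ 0 < wp H φ j * x + bp H φ j}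

/-- generalized gradient G -/
def grad (H : ℕ) (α : ℝ) (φ : EuclideanSpace ℝ (Fin (3*H+1))) :
    EuclideanSpace ℝ (Fin (3*H+1)) := WithLp.toLp 2 (fun i =>
  if h : i.1 < H then
    2 * vp H φ ⟨i.1, h⟩ * ∫ x in actSet H φ ⟨i.1, h⟩, x * (realization H φ x - α)
  else if h2 : i.1 < 2*H then
    2 * vp H φ ⟨i.1 - H, by omega⟩ * ∫ x in actSet H φ ⟨i.1 - H, by omega⟩, (realization H φ x - α)
  else if h3 : i.1 < 3*H then
    2 * ∫ x in (0:ℝ)..1,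
      max (wp H φ ⟨i.1 - 2*H, by omega⟩ * x + bp H φ ⟨i.1 - 2*H, by omega⟩) 0 * (realization H φ x - α)
  else 2 * ∫ x in (0:ℝ)..1, (realization H φ x - α))

/-- Lyapunov function V -/
def lyap (H : ℕ) (α : ℝ) (φ : EuclideanSpace ℝ (Fin (3*H+1))) : ℝ :=
  ‖φ‖^2 + (cp H φ - 2*α)^2

/-! Each component of `G(φ)` is, up to a factor `2 v_j` or `2`, an integral `∫_S g (N^φ - α)`
over some `S ⊆ [0,1]`, with multiplier `g` equal to `x`, `1`, `max (w_j x + b_j) 0` or `1`,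
bounded on `[0,1]` by `1`, `1`, `|w_j| + |b_j|`, `1`. On the probability space `[0,1]`,
Cauchy–Schwarz bounds the square of such an integral by `(sup |g|)² L_∞(φ)`. Summing the
`3H + 1` bounds, with `(|w_j| + |b_j|)² ≤ 2 (w_j² + b_j²)`, gives
`‖G(φ)‖² ≤ 8 ∑_j (w_j² + b_j² + v_j²) L_∞(φ) + 4 L_∞(φ)`. -/

open Set ProbabilityTheory

section ProbabilityMeasure

variable {Ω : Type*} [MeasurableSpace Ω] {μ : Measure Ω} [IsProbabilityMeasure μ]

theorem sq_integral_abs_le_integral_sq {f : Ω → ℝ} (hf : MemLp f 2 μ) :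
    (∫ x, |f x| ∂μ) ^ 2 ≤ ∫ x, f x ^ 2 ∂μ := by
  have h := variance_eq_sub hf.abs
  simp only [Pi.pow_apply, Pi.abs_apply, sq_abs] at h
  linarith [variance_nonneg |f| μ]

theorem sq_setIntegral_mul_le (s : Set Ω) {f g : Ω → ℝ} (hf : MemLp f 2 μ) {M : ℝ}
    (hg : ∀ᵐ x ∂μ, |g x| ≤ M) :
    (∫ x in s, g x * f x ∂μ) ^ 2 ≤ M ^ 2 * ∫ x, f x ^ 2 ∂μ := by
  have hMf : Integrable (fun x => M * |f x|) μ := (hf.integrable one_le_two).abs.const_mul M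
  have hMf_nonneg : 0 ≤ᵐ[μ] fun x => M * |f x| :=
    hg.mono fun x hx => mul_nonneg ((abs_nonneg _).trans hx) (abs_nonneg _)
  have hbound : |∫ x in s, g x * f x ∂μ| ≤ M * ∫ x, |f x| ∂μ :=
    calc |∫ x in s, g x * f x ∂μ|
        ≤ ∫ x in s, |g x * f x| ∂μ := abs_integral_le_integral_abs
      _ ≤ ∫ x in s, M * |f x| ∂μ :=
        integral_mono_of_nonneg (Filter.Eventually.of_forall fun _ => abs_nonneg _) hMf.restrict
          (ae_restrict_of_ae (hg.mono fun x hx => by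
            simpa only [abs_mul] using mul_le_mul_of_nonneg_right hx (abs_nonneg (f x))))
      _ ≤ ∫ x, M * |f x| ∂μ := setIntegral_le_integral hMf hMf_nonneg
      _ = M * ∫ x, |f x| ∂μ := integral_const_mul M _
  calc (∫ x in s, g x * f x ∂μ) ^ 2
      = |∫ x in s, g x * f x ∂μ| ^ 2 := (sq_abs _).symm
    _ ≤ (M * ∫ x, |f x| ∂μ) ^ 2 := pow_le_pow_left₀ (abs_nonneg _) hbound 2
    _ = M ^ 2 * (∫ x, |f x| ∂μ) ^ 2 := mul_pow _ _ _
    _ ≤ M ^ 2 * ∫ x, f x ^ 2 ∂μ := by gcongr; exact sq_integral_abs_le_integral_sq hf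

end ProbabilityMeasure

instance : IsProbabilityMeasure (volume.restrict (Icc (0 : ℝ) 1)) := ⟨by simp⟩

theorem sum_fin_three_mul_add_one {M : Type*} [AddCommMonoid M] (H : ℕ)
    (f : Fin (3 * H + 1) → M) :
    ∑ i, f i = ∑ j : Fin H, (f ⟨j, by omega⟩ + f ⟨H + j, by omega⟩ + f ⟨2 * H + j, by omega⟩)
      + f ⟨3 * H, by omega⟩ := by
  rw [Fin.sum_univ_castSucc, ← finProdFinEquiv.sum_comp, Fintype.sum_prod_type,
    Fin.sum_univ_three, ← Finset.sum_add_distrib, ← Finset.sum_add_distrib]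
  congr 1
  refine Finset.sum_congr rfl fun j _ => ?_
  congr 2 <;> congr 2 <;> ext <;> simp [finProdFinEquiv] <;> ring

theorem abs_max_mul_add_zero_le {w b x : ℝ} (hx : x ∈ Icc (0 : ℝ) 1) :
    |max (w * x + b) 0| ≤ |w| + |b| := by
  rw [abs_of_nonneg (le_max_right _ _)]
  refine max_le ?_ (by positivity)
  nlinarith [le_abs_self w, le_abs_self b, abs_nonneg w, hx.1, hx.2]

theorem actSet_subset_Icc {H : ℕ} (φ : EuclideanSpace ℝ (Fin (3 * H + 1))) (j : Fin H) :
    actSet H φ j ⊆ Icc 0 1 :=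
  fun _ hx => hx.1

section Network

variable {H : ℕ} {α : ℝ} {φ : EuclideanSpace ℝ (Fin (3 * H + 1))}

theorem continuous_realization : Continuous (realization H φ) := by
  unfold realization
  fun_prop

theorem risk_eq_integral_Icc :
    risk H α φ = ∫ x, (realization H φ x - α) ^ 2 ∂(volume.restrict (Icc 0 1)) := by
  rw [risk, intervalIntegral.integral_of_le zero_le_one, integral_Icc_eq_integral_Ioc]

theorem risk_nonneg : 0 ≤ risk H α φ :=
  intervalIntegral.integral_nonneg zero_le_one fun _ _ => sq_nonneg _

variable (α φ) in
theorem sq_setIntegral_mul_residual_le {S : Set ℝ} (hS : S ⊆ Icc 0 1) {g : ℝ → ℝ} {M : ℝ}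
    (hg : ∀ x ∈ Icc (0 : ℝ) 1, |g x| ≤ M) :
    (∫ x in S, g x * (realization H φ x - α)) ^ 2 ≤ M ^ 2 * risk H α φ := by
  have hF : Continuous fun x => realization H φ x - α :=
    continuous_realization.sub continuous_const
  have hF_memLp : MemLp (fun x => realization H φ x - α) 2 (volume.restrict (Icc 0 1)) :=
    (memLp_two_iff_integrable_sq hF.aestronglyMeasurable).2 (hF.pow 2).integrableOn_Icc
  rw [risk_eq_integral_Icc, ← Measure.restrict_restrict_of_subset hS]
  exact sq_setIntegral_mul_le S hF_memLp (ae_restrict_of_forall_mem measurableSet_Icc hg)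

theorem grad_apply_weight (j : Fin H) :
    grad H α φ ⟨j, by omega⟩ =
      2 * vp H φ j * ∫ x in actSet H φ j, x * (realization H φ x - α) := by
  simp [grad]

theorem grad_apply_bias (j : Fin H) :
    grad H α φ ⟨H + j, by omega⟩ =
      2 * vp H φ j * ∫ x in actSet H φ j, (realization H φ x - α) := by
  simp [grad, show H + (j : ℕ) < 2 * H by omega]

theorem grad_apply_outerWeight (j : Fin H) :
    grad H α φ ⟨2 * H + j, by omega⟩ =
      2 * ∫ x in (0 : ℝ)..1, max (wp H φ j * x + bp H φ j) 0 * (realization H φ x - α) := by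
  simp [grad, show ¬2 * H + (j : ℕ) < H by omega, show 2 * H + (j : ℕ) < 3 * H by omega]

theorem grad_apply_outerBias :
    grad H α φ ⟨3 * H, by omega⟩ = 2 * ∫ x in (0 : ℝ)..1, (realization H φ x - α) := by
  simp [grad, show ¬3 * H < H by omega, show ¬3 * H < 2 * H by omega]

theorem norm_sq_eq_sum_add_sq :
    ‖φ‖ ^ 2 = ∑ j : Fin H, (wp H φ j ^ 2 + bp H φ j ^ 2 + vp H φ j ^ 2) + cp H φ ^ 2 := by
  rw [EuclideanSpace.real_norm_sq_eq, sum_fin_three_mul_add_one]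
  rfl

theorem sq_grad_weight_le (j : Fin H) :
    grad H α φ ⟨j, by omega⟩ ^ 2 ≤ 4 * vp H φ j ^ 2 * risk H α φ := by
  have h := sq_setIntegral_mul_residual_le α φ (actSet_subset_Icc φ j) (g := fun x => x)
    (M := 1) fun x hx => by rw [abs_of_nonneg hx.1]; exact hx.2
  calc grad H α φ ⟨j, by omega⟩ ^ 2
      = 4 * vp H φ j ^ 2 * (∫ x in actSet H φ j, x * (realization H φ x - α)) ^ 2 := by
        rw [grad_apply_weight]; ring
    _ ≤ 4 * vp H φ j ^ 2 * risk H α φ := by gcongr; simpa using h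

theorem sq_grad_bias_le (j : Fin H) :
    grad H α φ ⟨H + j, by omega⟩ ^ 2 ≤ 4 * vp H φ j ^ 2 * risk H α φ := by
  have h := sq_setIntegral_mul_residual_le α φ (actSet_subset_Icc φ j)
    (g := fun _ => 1) (M := 1) fun _ _ => by norm_num
  calc grad H α φ ⟨H + j, by omega⟩ ^ 2
      = 4 * vp H φ j ^ 2 * (∫ x in actSet H φ j, (realization H φ x - α)) ^ 2 := by
        rw [grad_apply_bias]; ring
    _ ≤ 4 * vp H φ j ^ 2 * risk H α φ := by gcongr; simpa using h

theorem sq_grad_outerWeight_le (j : Fin H) :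
    grad H α φ ⟨2 * H + j, by omega⟩ ^ 2 ≤ 8 * (wp H φ j ^ 2 + bp H φ j ^ 2) * risk H α φ := by
  have h := sq_setIntegral_mul_residual_le α φ Ioc_subset_Icc_self
    (g := fun x => max (wp H φ j * x + bp H φ j) 0) fun _ hx => abs_max_mul_add_zero_le hx
  calc grad H α φ ⟨2 * H + j, by omega⟩ ^ 2
      = 4 * (∫ x in Ioc 0 1, max (wp H φ j * x + bp H φ j) 0 * (realization H φ x - α)) ^ 2 := by
        rw [grad_apply_outerWeight, intervalIntegral.integral_of_le zero_le_one]; ring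
    _ ≤ 4 * ((|wp H φ j| + |bp H φ j|) ^ 2 * risk H α φ) := by gcongr
    _ ≤ 4 * (2 * (wp H φ j ^ 2 + bp H φ j ^ 2) * risk H α φ) := by
        gcongr
        · exact risk_nonneg
        · simpa only [sq_abs] using add_sq_le (a := |wp H φ j|) (b := |bp H φ j|)
    _ = 8 * (wp H φ j ^ 2 + bp H φ j ^ 2) * risk H α φ := by ring

theorem sq_grad_outerBias_le : grad H α φ ⟨3 * H, by omega⟩ ^ 2 ≤ 4 * risk H α φ := by
  have h := sq_setIntegral_mul_residual_le α φ Ioc_subset_Icc_self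
    (g := fun _ => 1) (M := 1) fun _ _ => by norm_num
  calc grad H α φ ⟨3 * H, by omega⟩ ^ 2 = 4 * (∫ x in Ioc 0 1, (realization H φ x - α)) ^ 2 := by
        rw [grad_apply_outerBias, intervalIntegral.integral_of_le zero_le_one]; ring
    _ ≤ 4 * risk H α φ := by gcongr; simpa using h

end Network

theorem gradient_norm_sq_bound_general (H : ℕ) (α : ℝ)
    (φ : EuclideanSpace ℝ (Fin (3*H+1))) :
    ‖grad H α φ‖^2 ≤ (8 * ‖φ‖^2 + 4) * risk H α φ := by
  set R := risk H α φ
  calc ‖grad H α φ‖ ^ 2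
      ≤ ∑ j : Fin H, (4 * vp H φ j ^ 2 * R + 4 * vp H φ j ^ 2 * R
          + 8 * (wp H φ j ^ 2 + bp H φ j ^ 2) * R) + 4 * R := by
        rw [EuclideanSpace.real_norm_sq_eq, sum_fin_three_mul_add_one]
        gcongr with j
        exacts [sq_grad_weight_le j, sq_grad_bias_le j, sq_grad_outerWeight_le j,
          sq_grad_outerBias_le]
    _ = (8 * ∑ j : Fin H, (wp H φ j ^ 2 + bp H φ j ^ 2 + vp H φ j ^ 2) + 4) * R := by
        rw [add_mul, Finset.mul_sum, Finset.sum_mul]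
        exact congrArg (· + _) (Finset.sum_congr rfl fun _ _ => by ring)
    _ ≤ (8 * ‖φ‖ ^ 2 + 4) * R := by
        have := sq_nonneg (cp H φ)
        gcongr
        · exact risk_nonneg
        · rw [norm_sq_eq_sum_add_sq]; linarith

theorem gradient_norm_sq_bound (H : ℕ) (hH : 0 < H) (α : ℝ)
    (φ : EuclideanSpace ℝ (Fin (3*H+1))) :
    ‖grad H α φ‖^2 ≤ (8 * ‖φ‖^2 + 4) * risk H α φ :=
  gradient_norm_sq_bound_general H α φ
end
end
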